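/- arXiv:1303.2103 — 2 statements merged into one kernel-verified Lean document; each statement's English description precedes it below -/
import Mathlib

section
/- For every infinite colouring Δ : ℕ^(2) → ℕ, one has 3 ∈ G_Δ: there exists a subset X ⊆ ℕ that is exactly 3-coloured. -/
/-- The colour of the unordered edge `{x, y}` (only values on distinct pairs matter). -/
def edgeCol (Δ : ℕ → ℕ → ℕ) (x y : ℕ) : ℕ := Δ (min x y) (max x y)

/-- `colourSet Δ X` is the set of colours attained by `Δ` on edges with both endpoints in `X`. -/
def colourSet (Δ : ℕ → ℕ → ℕ) (X : Set ℕ) : Set ℕ :=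
  {c | ∃ x ∈ X, ∃ y ∈ X, x ≠ y ∧ edgeCol Δ x y = c}

/-- `G_Δ`: the set of `m ≥ 1` for which some (finite or infinite) `X ⊆ ℕ` is
exactly `m`-coloured. -/
def GSet (Δ : ℕ → ℕ → ℕ) : Set ℕ :=
  {m | 1 ≤ m ∧ ∃ X : Set ℕ, (colourSet Δ X).Finite ∧ (colourSet Δ X).ncard = m}

/-! Among the finite vertex sets carrying at least three colours (one exists since `Δ` takes
infinitely many values), take a minimal one `X`. If it carried four or more colours, deleting any
vertex `v` would lose at least two of them, so two edges `va`, `vb` would carry distinct colours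
not seen on `X \ {v}`. The triangle `{v, a, b}` then carries exactly three colours: those two and
the colour of `ab`, which is seen on `X \ {v}`. -/

lemma edgeCol_comm (Δ : ℕ → ℕ → ℕ) (x y : ℕ) : edgeCol Δ x y = edgeCol Δ y x := by
  simp only [edgeCol, min_comm, max_comm]

namespace colourSet

variable {Δ : ℕ → ℕ → ℕ}

lemma finite_coe_finset (Δ : ℕ → ℕ → ℕ) (X : Finset ℕ) : (colourSet Δ ↑X).Finite :=
  ((X.finite_toSet.image2 (edgeCol Δ) X.finite_toSet).subset
    fun _ ⟨x, hx, y, hy, _, hc⟩ ↦ ⟨x, hx, y, hy, hc⟩)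

lemma triangle {v a b : ℕ} (hva : v ≠ a) (hvb : v ≠ b) (hab : a ≠ b) :
    colourSet Δ {v, a, b} = {edgeCol Δ v a, edgeCol Δ v b, edgeCol Δ a b} := by
  ext c
  simp only [colourSet, Set.mem_insert_iff, Set.mem_singleton_iff, Set.mem_ofPred_eq]
  constructor
  · rintro ⟨x, hx, y, hy, hxy, rfl⟩
    rcases hx with hx | hx | hx <;> rcases hy with hy | hy | hy <;> subst x y <;>
      simp [edgeCol_comm Δ a v, edgeCol_comm Δ b v, edgeCol_comm Δ b a] at hxy ⊢
  · rintro (rfl | rfl | rfl)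
    exacts [⟨v, by simp, a, by simp, hva, rfl⟩, ⟨v, by simp, b, by simp, hvb, rfl⟩,
      ⟨a, by simp, b, by simp, hab, rfl⟩]

lemma exists_finset_le_ncard (hΔ : (colourSet Δ Set.univ).Infinite) (n : ℕ) :
    ∃ X : Finset ℕ, n ≤ (colourSet Δ ↑X).ncard := by
  obtain ⟨S, hS, rfl⟩ := hΔ.exists_subset_card_eq n
  have hedge : ∀ c ∈ S, ∃ x y, x ≠ y ∧ edgeCol Δ x y = c := fun c hc ↦ by
    obtain ⟨x, -, y, -, hxy⟩ := hS hc
    exact ⟨x, y, hxy⟩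
  choose! x y hxy hcol using hedge
  refine ⟨S.biUnion fun c ↦ {x c, y c}, ?_⟩
  rw [← Set.ncard_coe_finset S]
  refine Set.ncard_le_ncard (fun c hc ↦ ⟨x c, ?_, y c, ?_, hxy c hc, hcol c hc⟩)
    (finite_coe_finset Δ _) <;> exact Finset.mem_biUnion.2 ⟨c, hc, by simp⟩

lemma exists_mem_erase_of_mem_sdiff {X : Finset ℕ} {v c : ℕ}
    (hc : c ∈ colourSet Δ ↑X \ colourSet Δ ↑(X.erase v)) :
    ∃ a ∈ X.erase v, edgeCol Δ v a = c := by
  obtain ⟨⟨x, hx, y, hy, hxy, rfl⟩, hvc⟩ := hc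
  by_cases hxv : x = v
  · subst x
    exact ⟨y, Finset.mem_erase.2 ⟨hxy.symm, hy⟩, rfl⟩
  by_cases hyv : y = v
  · subst y
    exact ⟨x, Finset.mem_erase.2 ⟨hxv, hx⟩, edgeCol_comm Δ v x⟩
  exact (hvc ⟨x, Finset.mem_erase.2 ⟨hxv, hx⟩, y, Finset.mem_erase.2 ⟨hyv, hy⟩, hxy, rfl⟩).elim

lemma exists_subset_ncard_eq_three_of_erase {X : Finset ℕ} {v : ℕ} (hv : v ∈ X)
    (h : (colourSet Δ ↑(X.erase v)).ncard + 2 ≤ (colourSet Δ ↑X).ncard) :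
    ∃ Y ⊆ X, (colourSet Δ ↑Y).ncard = 3 := by
  set A := colourSet Δ ↑(X.erase v)
  have hnew : 1 < (colourSet Δ ↑X \ A).ncard := by
    have := Set.le_ncard_sdiff A (colourSet Δ ↑X) (finite_coe_finset Δ _)
    omega
  obtain ⟨c, c', hc, hc', hcc'⟩ := (Set.one_lt_ncard_iff (finite_coe_finset Δ X).sdiff).1 hnew
  obtain ⟨a, ha, rfl⟩ := exists_mem_erase_of_mem_sdiff hc
  obtain ⟨b, hb, rfl⟩ := exists_mem_erase_of_mem_sdiff hc'
  have hab : a ≠ b := by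
    rintro rfl
    exact hcc' rfl
  have hA : edgeCol Δ a b ∈ A := ⟨a, ha, b, hb, hab, rfl⟩
  refine ⟨{v, a, b}, ?_, ?_⟩
  · simp [Finset.insert_subset_iff, hv, Finset.mem_of_mem_erase ha, Finset.mem_of_mem_erase hb]
  · rw [Finset.coe_insert, Finset.coe_insert, Finset.coe_singleton,
      triangle (Finset.ne_of_mem_erase ha).symm (Finset.ne_of_mem_erase hb).symm hab]
    exact Set.ncard_eq_three.2
      ⟨_, _, _, hcc', fun h ↦ hc.2 (h ▸ hA), fun h ↦ hc'.2 (h ▸ hA), rfl⟩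

lemma exists_subset_ncard_eq_three (X : Finset ℕ) (hX : 3 ≤ (colourSet Δ ↑X).ncard) :
    ∃ Y ⊆ X, (colourSet Δ ↑Y).ncard = 3 := by
  induction X using Finset.strongInduction with
  | H X ih =>
    obtain h3 | h4 := hX.eq_or_lt
    · exact ⟨X, subset_rfl, h3.symm⟩
    by_cases hdel : ∃ v ∈ X, 3 ≤ (colourSet Δ ↑(X.erase v)).ncard
    · obtain ⟨v, hv, h⟩ := hdel
      obtain ⟨Y, hY, hY3⟩ := ih _ (Finset.erase_ssubset hv) h
      exact ⟨Y, hY.trans (Finset.erase_subset _ _), hY3⟩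
    push Not at hdel
    obtain ⟨-, v, hv, -⟩ :=
      Set.nonempty_of_ncard_ne_zero (by omega : (colourSet Δ ↑X).ncard ≠ 0)
    exact exists_subset_ncard_eq_three_of_erase hv (by have := hdel v hv; omega)

end colourSet

/-- For every infinite colouring `Δ : ℕ^(2) → ℕ`, we have `3 ∈ G_Δ`:
some `X ⊆ ℕ` is exactly 3-coloured. -/
theorem three_mem_GSet (Δ : ℕ → ℕ → ℕ) (hΔ : (colourSet Δ Set.univ).Infinite) :
    3 ∈ GSet Δ := by
  obtain ⟨X, hX⟩ := colourSet.exists_finset_le_ncard hΔ 3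
  obtain ⟨Y, -, hY⟩ := colourSet.exists_subset_ncard_eq_three X hX
  exact ⟨by norm_num, Y, colourSet.finite_coe_finset Δ Y, hY⟩
end

section
/- The set A = {k ∈ ℕ : there exist natural numbers a, b with k − 1 = ab and log k ≤ a ≤ b} has asymptotic density one, i.e., |A ∩ [N]|/N → 1 as N → ∞. -/
open Filter Real Finset Topology

def divisorSet : Set ℕ := {k : ℕ | ∃ a b : ℕ, k - 1 = a * b ∧ Real.log k ≤ (a : ℝ) ∧ a ≤ b}

theorem exists_dvd_le_sqrt_or_eq_mul_prime {L n : ℕ} (hL : 2 ≤ L) (hn : L ^ 4 ≤ n) :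
    (∃ d, d ∣ n ∧ L ≤ d ∧ d * d ≤ n) ∨ ∃ m p, p.Prime ∧ n = m * p ∧ 0 < m ∧ m < L := by
  set m := Nat.findGreatest (· ∣ n) (L - 1)
  have h1L : 1 ≤ L - 1 := by omega
  have hm_dvd : m ∣ n := Nat.findGreatest_spec (P := (· ∣ n)) h1L (one_dvd n)
  have hm_pos : 0 < m := Nat.le_findGreatest h1L (one_dvd n)
  have hmL : m < L := (Nat.findGreatest_le _).trans_lt (by omega)
  have hLn : L < n := by nlinarith [pow_le_pow_right₀ (by omega : 1 ≤ L) (by norm_num : 2 ≤ 4)]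
  obtain ⟨q, hq⟩ := hm_dvd
  by_cases hq_prime : q.Prime
  · exact Or.inr ⟨m, q, hq_prime, hq, hm_pos, hmL⟩
  left
  have hq_pos : 0 < q := Nat.pos_of_ne_zero (by rintro rfl; omega)
  have hq_one : q ≠ 1 := by rintro rfl; omega
  set p := q.minFac
  have hp_two : 2 ≤ p := (Nat.minFac_prime hq_one).two_le
  have hpq : p * p ≤ q := by simpa [sq] using Nat.minFac_sq_le_self hq_pos hq_prime
  have hmp_dvd : m * p ∣ n := hq ▸ mul_dvd_mul_left m (Nat.minFac_dvd q)
  by_cases hLp : L ≤ p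
  · refine ⟨p, dvd_of_mul_left_dvd hmp_dvd, hLp, ?_⟩
    exact hpq.trans (hq ▸ Nat.le_mul_of_pos_left q hm_pos)
  -- `m` is the largest divisor below `L`, so the larger divisor `m * p` is at least `L`.
  have hLmp : L ≤ m * p := by
    by_contra! h
    have : m * p ≤ m := Nat.le_findGreatest (by omega) hmp_dvd
    nlinarith
  refine ⟨m * p, hmp_dvd, hLmp, ?_⟩
  calc m * p * (m * p) ≤ L * L * (L * L) := by gcongr <;> omega
    _ = L ^ 4 := by ring
    _ ≤ n := hn

theorem card_primes_Ioc_mul_log_le {R M : ℕ} (hR : 0 < R) :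
    (#{p ∈ Ioc R M | p.Prime} : ℝ) * log R ≤ M * log 4 := by
  have hprod : R ^ #{p ∈ Ioc R M | p.Prime} ≤ 4 ^ M :=
    calc R ^ #{p ∈ Ioc R M | p.Prime} ≤ ∏ p ∈ Ioc R M with p.Prime, p :=
          pow_card_le_prod _ _ _ fun p hp => (mem_Ioc.1 (mem_filter.1 hp).1).1.le
      _ ≤ primorial M := by
          refine prod_le_prod_of_subset_of_one_le' (fun p hp => ?_) fun p hp _ => ?_
          · simp only [mem_filter, mem_Ioc, mem_range] at hp ⊢
            exact ⟨by omega, hp.2⟩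
          · exact (mem_filter.1 hp).2.one_lt.le
      _ ≤ 4 ^ M := primorial_le_four_pow M
  have := Real.log_le_log (by positivity) (by exact_mod_cast hprod : (R : ℝ) ^ _ ≤ (4 : ℝ) ^ M)
  rwa [Real.log_pow, Real.log_pow] at this

theorem exists_eq_mul_prime_add_one_of_notMem_divisorSet {N L R k : ℕ} (hLN : log N ≤ L)
    (hL : 2 ≤ L) (hkN : k ≤ N) (hk : R * L + L ^ 4 < k) (hkA : k ∉ divisorSet) :
    ∃ m ∈ Icc 1 L, ∃ p ∈ Ioc R (N / m), p.Prime ∧ k = m * p + 1 := by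
  obtain ⟨d, hd, hLd, hdd⟩ | ⟨m, p, hp, hmp, hm, hmL⟩ :=
    exists_dvd_le_sqrt_or_eq_mul_prime (n := k - 1) hL (by omega)
  · refine absurd ⟨d, (k - 1) / d, (Nat.mul_div_cancel' hd).symm, ?_, ?_⟩ hkA
    · calc log k ≤ log N := Real.log_le_log (by norm_cast; omega) (by exact_mod_cast hkN)
        _ ≤ L := hLN
        _ ≤ d := by exact_mod_cast hLd
    · exact (Nat.le_div_iff_mul_le (by omega)).2 hdd
  refine ⟨m, mem_Icc.2 ⟨hm, hmL.le⟩, p, mem_Ioc.2 ⟨?_, ?_⟩, hp, by omega⟩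
  · by_contra! hpR
    have : m * p ≤ R * L := by rw [mul_comm R]; exact Nat.mul_le_mul hmL.le hpR
    have : 0 < L ^ 4 := by positivity
    omega
  · exact (Nat.le_div_iff_mul_le hm).2 (by rw [mul_comm]; omega)

theorem ncard_Icc_diff_divisorSet_le {N L R : ℕ} (hLN : log N ≤ L) (hL : 2 ≤ L) :
    (Set.Icc 1 N \ divisorSet).ncard ≤
      R * L + L ^ 4 + ∑ m ∈ Icc 1 L, #{p ∈ Ioc R (N / m) | p.Prime} := by
  set cover := Icc 1 (R * L + L ^ 4) ∪
    (Icc 1 L).biUnion fun m => {p ∈ Ioc R (N / m) | p.Prime}.image (m * · + 1)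
  have hsub : Set.Icc 1 N \ divisorSet ⊆ cover := by
    rintro k ⟨⟨hk1, hkN⟩, hkA⟩
    rcases le_or_gt k (R * L + L ^ 4) with hkT | hkT
    · simp [cover, hk1, hkT]
    · obtain ⟨m, hm, p, hp, hpp, rfl⟩ :=
        exists_eq_mul_prime_add_one_of_notMem_divisorSet hLN hL hkN hkT hkA
      simp only [cover, coe_union, coe_biUnion, coe_image, coe_filter, Set.mem_union,
        Set.mem_iUnion, Set.mem_image]
      exact Or.inr ⟨m, hm, p, ⟨hp, hpp⟩, rfl⟩
  calc (Set.Icc 1 N \ divisorSet).ncard ≤ #cover :=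
        (Set.ncard_le_ncard hsub (finite_toSet _)).trans_eq (Set.ncard_coe_finset _)
    _ ≤ _ := (card_union_le _ _).trans <| add_le_add (by simp)
        (card_biUnion_le.trans (sum_le_sum fun m _ => card_image_le))

theorem sum_card_primes_Ioc_div_le {N L R : ℕ} (hR : 2 ≤ R) :
    ((∑ m ∈ Icc 1 L, #{p ∈ Ioc R (N / m) | p.Prime} : ℕ) : ℝ) ≤
      N * log 4 * (1 + log L) / log R := by
  rw [le_div_iff₀ (Real.log_pos (by exact_mod_cast hR)), Nat.cast_sum, sum_mul]
  calc ∑ m ∈ Icc 1 L, (#{p ∈ Ioc R (N / m) | p.Prime} : ℝ) * log R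
      ≤ ∑ m ∈ Icc 1 L, N * log 4 * (m : ℝ)⁻¹ := sum_le_sum fun m _ => by
        refine (card_primes_Ioc_mul_log_le (by omega)).trans ?_
        rw [mul_right_comm, ← div_eq_mul_inv]
        gcongr
        exact Nat.cast_div_le
    _ = N * log 4 * harmonic L := by rw [← mul_sum, harmonic_eq_sum_Icc]; push_cast; rfl
    _ ≤ N * log 4 * (1 + log L) := by
        gcongr
        exact harmonic_le_one_add_log L

noncomputable def exceptionBound (x : ℝ) : ℝ :=
  2 * log x / √x + 16 * log x ^ 4 / x + 4 * log 4 * (1 + log (2 * log x)) / log x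

theorem ncard_Icc_diff_divisorSet_div_le_exceptionBound {N : ℕ} (hN : 4 ≤ N) :
    ((Set.Icc 1 N \ divisorSet).ncard : ℝ) / N ≤ exceptionBound N := by
  set L := ⌈log N⌉₊
  set R := Nat.sqrt N
  have hN0 : (0 : ℝ) < N := by positivity
  have hlogN : 1 < log N := by
    have : (4 : ℝ) ≤ N := by exact_mod_cast hN
    rw [lt_log_iff_exp_lt hN0]
    linarith [exp_one_lt_d9]
  have hL : 2 ≤ L := Nat.lt_ceil.2 (by exact_mod_cast hlogN)
  have hL_le : (L : ℝ) ≤ 2 * log N := by linarith [Nat.ceil_lt_add_one (by linarith : 0 ≤ log N)]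
  have hR : 2 ≤ R := Nat.le_sqrt.2 hN
  have hR_le : (R : ℝ) ≤ √N := Real.nat_sqrt_le_real_sqrt
  have hlogR : log N / 4 ≤ log R := by
    have hNR : N ≤ R ^ 4 :=
      calc N ≤ (R + 1) ^ 2 := (Nat.lt_succ_sqrt' N).le
        _ ≤ (R * R) ^ 2 := by gcongr; nlinarith
        _ = R ^ 4 := by ring
    have := Real.log_le_log hN0 (by exact_mod_cast hNR : (N : ℝ) ≤ (R : ℝ) ^ 4)
    rw [Real.log_pow] at this
    push_cast at this
    linarith
  have hcount : ((Set.Icc 1 N \ divisorSet).ncard : ℝ) ≤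
      R * L + L ^ 4 + N * log 4 * (1 + log L) / log R := by
    have hcard := ncard_Icc_diff_divisorSet_le (R := R) (Nat.le_ceil _) hL
    have hsum := sum_card_primes_Ioc_div_le (N := N) (L := L) hR
    have := (Nat.cast_le (α := ℝ)).2 hcard
    push_cast at this hsum
    linarith
  have hsqrt : √N * √N = N := Real.mul_self_sqrt hN0.le
  calc ((Set.Icc 1 N \ divisorSet).ncard : ℝ) / N
      ≤ (R * L + L ^ 4 + N * log 4 * (1 + log L) / log R) / N := by gcongr
    _ = R * L / N + L ^ 4 / N + log 4 * (1 + log L) / log R := by field_simp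
    _ ≤ √N * (2 * log N) / N + (2 * log N) ^ 4 / N +
          log 4 * (1 + log (2 * log N)) / (log N / 4) := by
        gcongr
        exact mul_nonneg (Real.log_nonneg (by norm_num))
          (by linarith [Real.log_nonneg (by linarith : (1 : ℝ) ≤ 2 * log N)])
    _ = exceptionBound N := by
        rw [exceptionBound]
        field_simp
        linear_combination 2 * log N ^ 2 * hsqrt

theorem tendsto_one_add_log_two_mul_div_atTop :
    Tendsto (fun y : ℝ => (1 + log (2 * y)) / y) atTop (𝓝 0) := by
  have h := (tendsto_const_nhds (x := 1 + log 2)).div_atTop tendsto_id |>.add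
    isLittleO_log_id_atTop.tendsto_div_nhds_zero
  rw [zero_add] at h
  refine h.congr' ?_
  filter_upwards [eventually_gt_atTop 0] with y hy
  rw [Real.log_mul two_ne_zero hy.ne']
  simp only [id]
  ring

theorem tendsto_exceptionBound_atTop : Tendsto exceptionBound atTop (𝓝 0) := by
  have hsqrt : Tendsto (fun x : ℝ => log x / √x) atTop (𝓝 0) := by
    simpa only [Real.sqrt_eq_rpow] using
      (isLittleO_log_rpow_atTop one_half_pos).tendsto_div_nhds_zero
  have hpow : Tendsto (fun x : ℝ => log x ^ 4 / x) atTop (𝓝 0) := by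
    simpa using tendsto_pow_log_div_mul_add_atTop 1 0 4 one_ne_zero
  have h := ((hsqrt.const_mul 2).add (hpow.const_mul 16)).add
    ((tendsto_one_add_log_two_mul_div_atTop.comp tendsto_log_atTop).const_mul (4 * log 4))
  simp only [mul_zero, add_zero] at h
  refine h.congr fun x => ?_
  simp only [exceptionBound, Function.comp_apply, mul_div_assoc]

theorem tendsto_ncard_inter_Icc_div_of_tendsto_ncard_diff {S : Set ℕ}
    (h : Tendsto (fun N : ℕ => ((Set.Icc 1 N \ S).ncard : ℝ) / N) atTop (𝓝 0)) :
    Tendsto (fun N : ℕ => ((S ∩ Set.Icc 1 N).ncard : ℝ) / N) atTop (𝓝 1) := by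
  have h' := (tendsto_const_nhds (x := (1 : ℝ))).sub h
  rw [sub_zero] at h'
  refine h'.congr' ?_
  filter_upwards [eventually_ge_atTop 1] with N hN
  have hsplit := Set.ncard_inter_add_ncard_sdiff_eq_ncard (Set.Icc 1 N) S (Set.finite_Icc 1 N)
  rw [Set.inter_comm, Set.ncard_Icc_nat, add_tsub_cancel_right] at hsplit
  have hN0 : (N : ℝ) ≠ 0 := by positivity
  rw [eq_div_iff hN0, sub_mul, div_mul_cancel₀ _ hN0, one_mul]
  have hsplit' : ((S ∩ Set.Icc 1 N).ncard : ℝ) + (Set.Icc 1 N \ S).ncard = N := by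
    exact_mod_cast hsplit
  linarith

/-- The set `A = {k : ∃ a b ∈ ℕ, k - 1 = ab and log k ≤ a ≤ b}` has asymptotic
density one. -/
theorem density_one_of_divisor_set :
    Filter.Tendsto
      (fun N : ℕ =>
        (({k : ℕ | ∃ a b : ℕ, k - 1 = a * b ∧ Real.log k ≤ (a : ℝ) ∧ a ≤ b} ∩
            Set.Icc 1 N).ncard : ℝ) / N)
      Filter.atTop (nhds 1) := by
  refine tendsto_ncard_inter_Icc_div_of_tendsto_ncard_diff (S := divisorSet) ?_
  refine squeeze_zero' (.of_forall fun N => by positivity) ?_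
    (tendsto_exceptionBound_atTop.comp tendsto_natCast_atTop_atTop)
  filter_upwards [eventually_ge_atTop 4] with N hN
  exact ncard_Icc_diff_divisorSet_div_le_exceptionBound hN
end
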